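/- arXiv:2006.14755 — 4 statements merged into one kernel-verified Lean document; each statement's English description precedes it below -/
import Mathlib

section
/- Let s ∈ ℝ^p be a nonzero vector, let H be a p×p real symmetric matrix with μ‖v‖² ≤ vᵀHv ≤ L‖v‖² for all v ∈ ℝ^p where 0 < μ ≤ L, and set y = Hs (so yᵀs > 0). Then for every p×p real matrix M, the matrix C := (I − s yᵀ/(yᵀ s)) M (I − y sᵀ/(yᵀ s)) + s sᵀ/(yᵀ s) satisfies the operator-norm bound ‖C‖ ≤ (1 + L/μ)² ‖M‖ + 1/μ. -/
open scoped RealInnerProductSpace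

set_option maxHeartbeats 1000000 in
set_option synthInstance.maxHeartbeats 400000 in
theorem stmt_3 (p : ℕ) (μ L : ℝ) (hμ : 0 < μ) (hμL : μ ≤ L)
    (s : EuclideanSpace ℝ (Fin p)) (hs : s ≠ 0)
    (H M : EuclideanSpace ℝ (Fin p) →L[ℝ] EuclideanSpace ℝ (Fin p))
    (hsymm : ∀ x y : EuclideanSpace ℝ (Fin p), ⟪H x, y⟫ = ⟪x, H y⟫)
    (hlow : ∀ v : EuclideanSpace ℝ (Fin p), μ * ‖v‖ ^ 2 ≤ ⟪v, H v⟫)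
    (hup : ∀ v : EuclideanSpace ℝ (Fin p), ⟪v, H v⟫ ≤ L * ‖v‖ ^ 2) :
    ‖(ContinuousLinearMap.id ℝ (EuclideanSpace ℝ (Fin p))
          - (⟪H s, s⟫)⁻¹ • ((innerSL ℝ (H s)).smulRight s)).comp
        (M.comp (ContinuousLinearMap.id ℝ (EuclideanSpace ℝ (Fin p))
          - (⟪H s, s⟫)⁻¹ • ((innerSL ℝ s).smulRight (H s))))
      + (⟪H s, s⟫)⁻¹ • ((innerSL ℝ s).smulRight s)‖
      ≤ (1 + L / μ) ^ 2 * ‖M‖ + 1 / μ := by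
  have hL : (0:ℝ) < L := hμ.trans_le hμL
  have hBnn : ∀ w : EuclideanSpace ℝ (Fin p), 0 ≤ ⟪w, H w⟫ := fun w =>
    le_trans (by positivity) (hlow w)
  have hCS : ∀ u v : EuclideanSpace ℝ (Fin p),
      ⟪u, H v⟫ ^ 2 ≤ ⟪u, H u⟫ * ⟪v, H v⟫ := by
    intro u v
    have h := discrim_le_zero (a := ⟪v, H v⟫) (b := 2 * ⟪u, H v⟫) (c := ⟪u, H u⟫) ?_
    · rw [discrim] at h; nlinarith
    · intro t
      have hmap : H (u + t • v) = H u + t • H v := by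
        rw [map_add, map_smul]
      have hsym : ⟪v, H u⟫ = ⟪u, H v⟫ := by
        rw [← hsymm v u, real_inner_comm]
      have hexp : ⟪u + t • v, H (u + t • v)⟫
          = ⟪u, H u⟫ + t * ⟪v, H u⟫ + t * ⟪u, H v⟫ + t * t * ⟪v, H v⟫ := by
        rw [hmap]
        simp only [inner_add_left, inner_add_right, real_inner_smul_left,
          real_inner_smul_right]
        ring
      have hnn := hBnn (u + t • v)
      rw [hexp, hsym] at hnn
      linarith
  have hspos : (0:ℝ) < ‖s‖ := norm_pos_iff.mpr hs
  have hHs : ‖H s‖ ≤ L * ‖s‖ := by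
    rcases eq_or_ne (H s) 0 with h0 | h0
    · rw [h0, norm_zero]; positivity
    · have hHspos : (0:ℝ) < ‖H s‖ := norm_pos_iff.mpr h0
      have h1 : ⟪(H s : EuclideanSpace ℝ (Fin p)), H s⟫ = ‖H s‖ ^ 2 :=
        real_inner_self_eq_norm_sq _
      have h2 := hCS (H s) s
      have h3 := hup (H s)
      have h4 := hup s
      have h5 := hBnn s
      have hmm := mul_le_mul h3 h4 h5 (by positivity : (0:ℝ) ≤ L * ‖H s‖ ^ 2)
      have h6 : ‖H s‖ ^ 2 * ‖H s‖ ^ 2 ≤ (L * ‖s‖) ^ 2 * ‖H s‖ ^ 2 := by nlinarith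
      have h7 : ‖H s‖ ^ 2 ≤ (L * ‖s‖) ^ 2 :=
        le_of_mul_le_mul_right h6 (by positivity)
      exact (abs_le_of_sq_le_sq' h7 (by positivity)).2
  have hβ : μ * ‖s‖ ^ 2 ≤ ⟪H s, s⟫ := by
    rw [real_inner_comm]; exact hlow s
  have hβpos : (0:ℝ) < ⟪H s, s⟫ := lt_of_lt_of_le (by positivity) hβ
  have hinv : (⟪H s, s⟫)⁻¹ * (‖H s‖ * ‖s‖) ≤ L / μ := by
    rw [inv_mul_le_iff₀ hβpos, mul_div_assoc', le_div_iff₀ hμ]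
    nlinarith [mul_le_mul_of_nonneg_right hHs (mul_pos hμ hspos).le,
      mul_le_mul_of_nonneg_left hβ hL.le]
  have hinv2 : (⟪H s, s⟫)⁻¹ * (‖s‖ * ‖s‖) ≤ 1 / μ := by
    rw [inv_mul_le_iff₀ hβpos, mul_div_assoc', le_div_iff₀ hμ]
    nlinarith
  set T1 := ContinuousLinearMap.id ℝ (EuclideanSpace ℝ (Fin p))
      - (⟪H s, s⟫)⁻¹ • ((innerSL ℝ (H s)).smulRight s) with hT1
  set T2 := ContinuousLinearMap.id ℝ (EuclideanSpace ℝ (Fin p))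
      - (⟪H s, s⟫)⁻¹ • ((innerSL ℝ s).smulRight (H s)) with hT2
  set T3 := (⟪H s, s⟫)⁻¹ • ((innerSL ℝ s).smulRight s) with hT3
  have hidle := ContinuousLinearMap.norm_id_le
    (E := EuclideanSpace ℝ (Fin p)) (𝕜 := ℝ)
  have hA : ‖T1‖ ≤ 1 + L / μ := by
    refine le_trans (norm_sub_le _ _) ?_
    have : ‖(⟪H s, s⟫)⁻¹ • ((innerSL ℝ (H s)).smulRight s)‖ ≤ L / μ := by
      refine le_trans (ContinuousLinearMap.opNorm_smul_le _ _) ?_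
      rw [ContinuousLinearMap.norm_smulRight_apply, innerSL_apply_norm,
        Real.norm_eq_abs, abs_of_pos (inv_pos.mpr hβpos)]
      exact hinv
    linarith
  have hB : ‖T2‖ ≤ 1 + L / μ := by
    refine le_trans (norm_sub_le _ _) ?_
    have : ‖(⟪H s, s⟫)⁻¹ • ((innerSL ℝ s).smulRight (H s))‖ ≤ L / μ := by
      refine le_trans (ContinuousLinearMap.opNorm_smul_le _ _) ?_
      rw [ContinuousLinearMap.norm_smulRight_apply, innerSL_apply_norm,
        Real.norm_eq_abs, abs_of_pos (inv_pos.mpr hβpos)]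
      calc (⟪H s, s⟫)⁻¹ * (‖s‖ * ‖H s‖) = (⟪H s, s⟫)⁻¹ * (‖H s‖ * ‖s‖) := by ring
        _ ≤ L / μ := hinv
    linarith
  have hC : ‖T3‖ ≤ 1 / μ := by
    rw [hT3]
    refine le_trans (ContinuousLinearMap.opNorm_smul_le _ _) ?_
    rw [ContinuousLinearMap.norm_smulRight_apply, innerSL_apply_norm,
      Real.norm_eq_abs, abs_of_pos (inv_pos.mpr hβpos)]
    exact hinv2
  calc ‖T1.comp (M.comp T2) + T3‖ ≤ ‖T1.comp (M.comp T2)‖ + ‖T3‖ := norm_add_le _ _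
    _ ≤ ‖T1‖ * ‖M.comp T2‖ + ‖T3‖ := by
        have := ContinuousLinearMap.opNorm_comp_le T1 (M.comp T2)
        linarith
    _ ≤ ‖T1‖ * (‖M‖ * ‖T2‖) + ‖T3‖ := by
        have h := ContinuousLinearMap.opNorm_comp_le M T2
        have := norm_nonneg T1
        nlinarith
    _ ≤ (1 + L / μ) ^ 2 * ‖M‖ + 1 / μ := by
        have h1 := norm_nonneg T1
        have h2 := norm_nonneg T2
        have h3 := norm_nonneg M
        have h4 : (0:ℝ) ≤ L / μ := by positivity
        nlinarith [mul_le_mul_of_nonneg_right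
          (mul_le_mul hA hB h2 (by linarith : (0:ℝ) ≤ 1 + L / μ)) h3]
end

section
/- Let n, r be naturals with 1 ≤ r < n, and for i = 1,…,n let F_i : ℝ^p → ℝ be twice continuously differentiable with μ‖v‖² ≤ ⟨v, ∇²F_i(x) v⟩ ≤ L‖v‖² for all x, v ∈ ℝ^p, where 0 < μ ≤ L. Let R ⊆ {1,…,n} with |R| = r, let 0 < η ≤ 2/(L+μ), and define sequences w_t and u_t by w₀ = u₀ and w_{t+1} = w_t − (η/n) Σ_{i=1}^n ∇F_i(w_t), u_{t+1} = u_t − (η/(n−r)) Σ_{i∉R} ∇F_i(u_t). If ‖∇F_i(u_t)‖ ≤ c₂ for all i and all t, then for every t, ‖w_t − u_t‖ ≤ (2c₂/μ)·(r/n). -/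
open scoped RealInnerProductSpace

/-- A symmetric continuous linear map whose quadratic form is bounded by `M‖v‖²`
has operator bound `M`. -/
lemma symm_quad_norm_bound {E : Type*} [NormedAddCommGroup E] [InnerProductSpace ℝ E]
    (T : E →L[ℝ] E) (M : ℝ) (hM : 0 ≤ M)
    (hsymm : ∀ a b : E, ⟪T a, b⟫ = ⟪a, T b⟫)
    (hQ : ∀ v : E, |⟪v, T v⟫| ≤ M * ‖v‖ ^ 2) (u : E) : ‖T u‖ ≤ M * ‖u‖ := by
  have key : ∀ a b : E, ⟪T a, b⟫ ≤ M / 2 * (‖a‖ ^ 2 + ‖b‖ ^ 2) := by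
    intro a b
    have h4 : (4 : ℝ) * ⟪T a, b⟫ = ⟪a + b, T (a + b)⟫ - ⟪a - b, T (a - b)⟫ := by
      simp only [map_add, map_sub, inner_add_left, inner_add_right, inner_sub_left,
        inner_sub_right]
      have h1 := hsymm a b
      have h2 := real_inner_comm b (T a)
      linarith
    have pb : ‖a + b‖ ^ 2 + ‖a - b‖ ^ 2 = 2 * ‖a‖ ^ 2 + 2 * ‖b‖ ^ 2 := by
      have h1 := norm_add_sq_real a b
      have h2 := norm_sub_sq_real a b
      linarith
    have e1 : ⟪a + b, T (a + b)⟫ ≤ M * ‖a + b‖ ^ 2 := (abs_le.1 (hQ _)).2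
    have e2 : -(M * ‖a - b‖ ^ 2) ≤ ⟪a - b, T (a - b)⟫ := (abs_le.1 (hQ _)).1
    have e3 : M * ‖a + b‖ ^ 2 + M * ‖a - b‖ ^ 2 = M * (2 * ‖a‖ ^ 2 + 2 * ‖b‖ ^ 2) := by
      rw [← mul_add, pb]
    linarith
  rcases eq_or_ne (T u) 0 with h | h
  · rw [h, norm_zero]; positivity
  have hTu : 0 < ‖T u‖ := norm_pos_iff.2 h
  have hu0 : u ≠ 0 := by rintro rfl; simp at h
  have hun : 0 < ‖u‖ := norm_pos_iff.2 hu0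
  have hb := key u ((‖u‖ / ‖T u‖) • T u)
  have hv : ‖(‖u‖ / ‖T u‖) • T u‖ = ‖u‖ := by
    rw [norm_smul, Real.norm_eq_abs, abs_div, abs_of_nonneg hun.le,
      abs_of_nonneg hTu.le, div_mul_cancel₀ _ hTu.ne']
  have hiv : ⟪T u, (‖u‖ / ‖T u‖) • T u⟫ = ‖u‖ * ‖T u‖ := by
    rw [real_inner_smul_right, real_inner_self_eq_norm_sq]
    field_simp
  rw [hiv, hv] at hb
  have h2 : ‖u‖ * ‖T u‖ ≤ M * ‖u‖ * ‖u‖ := by nlinarith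
  have := (mul_le_mul_iff_right₀ hun).1 (by linarith [h2] : ‖u‖ * ‖T u‖ ≤ ‖u‖ * (M * ‖u‖))
  linarith

set_option maxHeartbeats 1000000 in
theorem stmt_7 (p n r : ℕ) (hr : 1 ≤ r) (hrn : r < n) (μ L η c₂ : ℝ)
    (hμ : 0 < μ) (hμL : μ ≤ L)
    (F : Fin n → EuclideanSpace ℝ (Fin p) → ℝ) (hF : ∀ i, ContDiff ℝ 2 (F i))
    (hlow : ∀ i, ∀ x v : EuclideanSpace ℝ (Fin p),
      μ * ‖v‖ ^ 2 ≤ ⟪v, fderiv ℝ (gradient (F i)) x v⟫)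
    (hup : ∀ i, ∀ x v : EuclideanSpace ℝ (Fin p),
      ⟪v, fderiv ℝ (gradient (F i)) x v⟫ ≤ L * ‖v‖ ^ 2)
    (R : Finset (Fin n)) (hR : R.card = r)
    (hη : 0 < η) (hη2 : η ≤ 2 / (L + μ))
    (w u : ℕ → EuclideanSpace ℝ (Fin p)) (h0 : w 0 = u 0)
    (hw : ∀ t, w (t + 1) = w t - (η / n) • ∑ i, gradient (F i) (w t))
    (hu : ∀ t, u (t + 1) = u t - (η / ((n : ℝ) - r)) • ∑ i ∈ Rᶜ, gradient (F i) (u t))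
    (hc : ∀ i t, ‖gradient (F i) (u t)‖ ≤ c₂) :
    ∀ t, ‖w t - u t‖ ≤ (2 * c₂ / μ) * ((r : ℝ) / n) := by
  classical
  have hn : 0 < n := lt_of_le_of_lt (Nat.zero_le r) hrn
  have hnR : (0 : ℝ) < n := by exact_mod_cast hn
  have hrR : (0 : ℝ) < r := by exact_mod_cast hr
  have hnrR : (0 : ℝ) < (n : ℝ) - r := by
    have : (r : ℝ) < n := by exact_mod_cast hrn
    linarith
  have hLμ : 0 < L + μ := by linarith
  have hηLμ : η * (L + μ) ≤ 2 := by
    rw [le_div_iff₀ hLμ] at hη2; linarith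
  have hημ1 : η * μ ≤ 1 := by nlinarith
  have hc2 : 0 ≤ c₂ := le_trans (norm_nonneg _) (hc ⟨0, hn⟩ 0)
  -- regularity of the gradients
  have hg : ∀ i, ContDiff ℝ 1 (gradient (F i)) := by
    intro i
    have h1 : ContDiff ℝ 1 (fderiv ℝ (F i)) := (hF i).fderiv_right (by norm_num)
    exact (InnerProductSpace.toDual ℝ (EuclideanSpace ℝ (Fin p))).symm.contDiff.comp h1
  set H := fun (i : Fin n) (x : EuclideanSpace ℝ (Fin p)) => fderiv ℝ (gradient (F i)) x
    with hHdef
  have hH : ∀ i x, HasFDerivAt (gradient (F i)) (H i x) x := fun i x =>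
    ((hg i).differentiable one_ne_zero x).hasFDerivAt
  -- symmetry of the Hessians
  have hsymH : ∀ i x (a b : EuclideanSpace ℝ (Fin p)), ⟪H i x a, b⟫ = ⟪H i x b, a⟫ := by
    intro i x a b
    set T : EuclideanSpace ℝ (Fin p) →L[ℝ] (EuclideanSpace ℝ (Fin p) →L[ℝ] ℝ) :=
      innerSL ℝ with hT
    have hTapp : ∀ y : EuclideanSpace ℝ (Fin p),
        T y = InnerProductSpace.toDual ℝ (EuclideanSpace ℝ (Fin p)) y := by
      intro y
      ext z
      rw [hT, innerSL_apply_apply, InnerProductSpace.toDual_apply_apply]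
    have hf' : ∀ y, HasFDerivAt (F i) (T (gradient (F i) y)) y := by
      intro y
      have hd := ((hF i).differentiable (by norm_num) y).hasFDerivAt
      have hTg : T (gradient (F i) y) = fderiv ℝ (F i) y := by
        rw [hTapp, gradient]
        exact (InnerProductSpace.toDual ℝ (EuclideanSpace ℝ (Fin p))).apply_symm_apply _
      rw [hTg]; exact hd
    have h2 : HasFDerivAt (fun y => T (gradient (F i) y)) (T.comp (H i x)) x :=
      T.hasFDerivAt.comp x (hH i x)
    have hsd := second_derivative_symmetric hf' h2 a b
    rw [ContinuousLinearMap.comp_apply, ContinuousLinearMap.comp_apply, hTapp, hTapp,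
      InnerProductSpace.toDual_apply_apply, InnerProductSpace.toDual_apply_apply] at hsd
    exact hsd
  -- the full-data gradient descent map and its derivative
  set c : ℝ := η / n with hcdef
  have hcpos : 0 < c := div_pos hη hnR
  have hcn : c * n = η := div_mul_cancel₀ _ hnR.ne'
  set Φ := fun x : EuclideanSpace ℝ (Fin p) => x - c • ∑ i, gradient (F i) x with hΦdef
  set A := fun x : EuclideanSpace ℝ (Fin p) =>
    ContinuousLinearMap.id ℝ (EuclideanSpace ℝ (Fin p)) - c • ∑ i, H i x with hAdef
  have hΦd : ∀ x, HasFDerivAt Φ (A x) x := by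
    intro x
    exact (hasFDerivAt_id x).sub ((HasFDerivAt.fun_sum (fun i _ => hH i x)).const_smul c)
  have hApp : ∀ x v, A x v = v - c • ∑ i, H i x v := by
    intro x v
    simp [hAdef, ContinuousLinearMap.sum_apply]
  -- quadratic form bounds for A x
  have hAq : ∀ x v, |⟪v, A x v⟫| ≤ (1 - η * μ) * ‖v‖ ^ 2 := by
    intro x v
    have hsumlow : (n : ℝ) * (μ * ‖v‖ ^ 2) ≤ ∑ i, ⟪v, H i x v⟫ := by
      have := Finset.card_nsmul_le_sum Finset.univ (fun i => ⟪v, H i x v⟫) (μ * ‖v‖ ^ 2)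
        (fun i _ => hlow i x v)
      simpa [nsmul_eq_mul] using this
    have hsumup : ∑ i, ⟪v, H i x v⟫ ≤ (n : ℝ) * (L * ‖v‖ ^ 2) := by
      have := Finset.sum_le_card_nsmul Finset.univ (fun i => ⟪v, H i x v⟫) (L * ‖v‖ ^ 2)
        (fun i _ => hup i x v)
      simpa [nsmul_eq_mul] using this
    have hq : ⟪v, A x v⟫ = ‖v‖ ^ 2 - c * ∑ i, ⟪v, H i x v⟫ := by
      rw [hApp, inner_sub_right, real_inner_smul_right, real_inner_self_eq_norm_sq,
        inner_sum]
    have h1 : c * (∑ i, ⟪v, H i x v⟫) ≤ c * ((n : ℝ) * (L * ‖v‖ ^ 2)) :=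
      mul_le_mul_of_nonneg_left hsumup hcpos.le
    have h2 : c * ((n : ℝ) * (μ * ‖v‖ ^ 2)) ≤ c * (∑ i, ⟪v, H i x v⟫) :=
      mul_le_mul_of_nonneg_left hsumlow hcpos.le
    have hL' : c * ((n : ℝ) * (L * ‖v‖ ^ 2)) = η * L * ‖v‖ ^ 2 := by
      rw [← mul_assoc, hcn]; ring
    have hμ' : c * ((n : ℝ) * (μ * ‖v‖ ^ 2)) = η * μ * ‖v‖ ^ 2 := by
      rw [← mul_assoc, hcn]; ring
    rw [hL'] at h1
    rw [hμ'] at h2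
    have hkey : η * L * ‖v‖ ^ 2 + η * μ * ‖v‖ ^ 2 ≤ 2 * ‖v‖ ^ 2 := by
      have := mul_nonneg (by linarith : (0:ℝ) ≤ 2 - η * (L + μ)) (sq_nonneg ‖v‖)
      nlinarith
    rw [hq, abs_le]
    refine ⟨by linarith, by linarith⟩
  -- symmetry of A x
  have hAs : ∀ x (a b : EuclideanSpace ℝ (Fin p)), ⟪A x a, b⟫ = ⟪a, A x b⟫ := by
    intro x a b
    rw [hApp, hApp, inner_sub_left, inner_sub_right, real_inner_smul_left,
      real_inner_smul_right, sum_inner, inner_sum]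
    have : ∑ i, ⟪H i x a, b⟫ = ∑ i, ⟪a, H i x b⟫ := by
      refine Finset.sum_congr rfl fun i _ => ?_
      rw [hsymH i x a b, real_inner_comm]
    rw [this]
  have hA1 : 0 ≤ 1 - η * μ := by linarith
  have hAnorm : ∀ x, ‖A x‖ ≤ 1 - η * μ := fun x =>
    ContinuousLinearMap.opNorm_le_bound _ hA1
      (fun v => symm_quad_norm_bound (A x) _ hA1 (hAs x) (hAq x) v)
  -- contraction property
  have hcontr : ∀ a b : EuclideanSpace ℝ (Fin p),
      ‖Φ a - Φ b‖ ≤ (1 - η * μ) * ‖a - b‖ := by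
    intro a b
    have := Convex.norm_image_sub_le_of_norm_fderiv_le (f := Φ) (s := Set.univ) (C := 1 - η * μ)
      (fun x _ => (hΦd x).differentiableAt)
      (fun x _ => by rw [(hΦd x).fderiv]; exact hAnorm x)
      convex_univ (Set.mem_univ b) (Set.mem_univ a)
    simpa using this
  -- perturbation bound
  have hsum_bound : ∀ (s : Finset (Fin n)) t, ‖∑ i ∈ s, gradient (F i) (u t)‖ ≤ s.card * c₂ := by
    intro s t
    calc ‖∑ i ∈ s, gradient (F i) (u t)‖ ≤ ∑ i ∈ s, ‖gradient (F i) (u t)‖ :=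
          norm_sum_le _ _
      _ ≤ s.card * c₂ := by
          have := Finset.sum_le_card_nsmul s (fun i => ‖gradient (F i) (u t)‖) c₂
            (fun i _ => hc i t)
          simpa [nsmul_eq_mul] using this
  have hcardc : (Rᶜ : Finset (Fin n)).card = n - r := by
    rw [Finset.card_compl, hR, Fintype.card_fin]
  have hcardcR : ((Rᶜ : Finset (Fin n)).card : ℝ) = (n : ℝ) - r := by
    rw [hcardc, Nat.cast_sub hrn.le]
  -- the main induction
  intro t
  induction t with
  | zero =>
      rw [h0, sub_self, norm_zero]
      positivity
  | succ t ih =>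
      set Sc := ∑ i ∈ Rᶜ, gradient (F i) (u t) with hSc
      set SR := ∑ i ∈ R, gradient (F i) (u t) with hSR
      have hsplit : ∑ i, gradient (F i) (u t) = SR + Sc := (Finset.sum_add_sum_compl R _).symm
      have hdecomp : w (t + 1) - u (t + 1) =
          (Φ (w t) - Φ (u t)) + ((η / ((n : ℝ) - r)) • Sc - c • (SR + Sc)) := by
        rw [hw t, hu t, hΦdef]
        simp only [← hsplit]
        abel
      have hSc_bound : ‖Sc‖ ≤ ((n : ℝ) - r) * c₂ := by
        have := hsum_bound Rᶜ t
        rwa [hcardcR] at this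
      have hSR_bound : ‖SR‖ ≤ (r : ℝ) * c₂ := by
        have := hsum_bound R t
        rwa [hR] at this
      have hcoef : 0 ≤ η / ((n : ℝ) - r) - c := by
        rw [hcdef, sub_nonneg, div_le_div_iff₀ hnR hnrR]
        nlinarith
      have hpert : ‖(η / ((n : ℝ) - r)) • Sc - c • (SR + Sc)‖ ≤ 2 * η * r * c₂ / n := by
        have heq : (η / ((n : ℝ) - r)) • Sc - c • (SR + Sc) =
            (η / ((n : ℝ) - r) - c) • Sc - c • SR := by
          rw [smul_add, sub_smul]; abel
        rw [heq]
        calc ‖(η / ((n : ℝ) - r) - c) • Sc - c • SR‖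
            ≤ ‖(η / ((n : ℝ) - r) - c) • Sc‖ + ‖c • SR‖ := norm_sub_le _ _
          _ = (η / ((n : ℝ) - r) - c) * ‖Sc‖ + c * ‖SR‖ := by
              rw [norm_smul, norm_smul, Real.norm_eq_abs, Real.norm_eq_abs,
                abs_of_nonneg hcoef, abs_of_nonneg hcpos.le]
          _ ≤ (η / ((n : ℝ) - r) - c) * (((n : ℝ) - r) * c₂) + c * ((r : ℝ) * c₂) := by
              gcongr
          _ = 2 * η * r * c₂ / n := by
              rw [hcdef]
              field_simp
              ring
      calc ‖w (t + 1) - u (t + 1)‖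
          ≤ ‖Φ (w t) - Φ (u t)‖ + ‖(η / ((n : ℝ) - r)) • Sc - c • (SR + Sc)‖ := by
            rw [hdecomp]; exact norm_add_le _ _
        _ ≤ (1 - η * μ) * ‖w t - u t‖ + 2 * η * r * c₂ / n :=
            add_le_add (hcontr (w t) (u t)) hpert
        _ ≤ (1 - η * μ) * ((2 * c₂ / μ) * ((r : ℝ) / n)) + 2 * η * r * c₂ / n := by
            gcongr
        _ = (2 * c₂ / μ) * ((r : ℝ) / n) := by
            field_simp
            ring
end

section
/- Let n, r be naturals with 1 ≤ r and r/n < 1/2, for i = 1,…,n let F_i : ℝ^p → ℝ be twice continuously differentiable with μ‖v‖² ≤ ⟨v, ∇²F_i(x) v⟩ ≤ L‖v‖² for all x, v (0 < μ ≤ L), and set F = (1/n)Σ_{i=1}^n F_i. Let R ⊆ {1,…,n}, |R| = r, let 0 < η ≤ 2/(L+μ), and let 0 ≤ ξ ≤ μ/2. Define w_{t+1} = w_t − η∇F(w_t) and i₀ = w₀, i_{t+1} = i_t − (η/(n−r))·[ n·(B_t(i_t − w_t) + ∇F(w_t)) − Σ_{i∈R} ∇F_i(i_t) ], where each B_t is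 a p×p symmetric matrix satisfying ‖B_t − H̄_t‖ ≤ ξ with H̄_t = ∫₀¹ ∇²F(w_t + x(i_t − w_t)) dx. If ‖∇F_i(w_t)‖ ≤ c₂ for all i and t, then for every t, ‖i_t − w_t‖ ≤ (2 r c₂ / n) / ((1 − r/n)·μ − ξ); in particular ‖i_t − w_t‖ ≤ (1/(1/2 − r/n)) · (2c₂/μ) · (r/n). -/
open scoped RealInnerProductSpace
open MeasureTheory

set_option linter.unusedSectionVars false
set_option linter.unusedVariables false
set_option maxHeartbeats 1000000

section aux
variable {E : Type*} [NormedAddCommGroup E] [InnerProductSpace ℝ E] [CompleteSpace E]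

noncomputable def dIso (E : Type*) [NormedAddCommGroup E] [InnerProductSpace ℝ E]
    [CompleteSpace E] : StrongDual ℝ E ≃L[ℝ] E where
  toFun := (InnerProductSpace.toDual ℝ E).symm
  invFun := (InnerProductSpace.toDual ℝ E)
  map_add' := by simp
  map_smul' := by simp [starRingEnd_apply]
  left_inv := fun y => by simp
  right_inv := fun y => by simp
  continuous_toFun := (InnerProductSpace.toDual ℝ E).symm.continuous
  continuous_invFun := (InnerProductSpace.toDual ℝ E).continuous

lemma inner_dIso (y : StrongDual ℝ E) (v : E) : ⟪dIso E y, v⟫ = y v :=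
  InnerProductSpace.toDual_symm_apply

lemma gradient_eq_dIso (f : E → ℝ) : gradient f = (dIso E) ∘ (fderiv ℝ f) := rfl

lemma contDiff_gradient {f : E → ℝ} (hf : ContDiff ℝ 2 f) : ContDiff ℝ 1 (gradient f) := by
  rw [gradient_eq_dIso]
  exact ((dIso E).toContinuousLinearMap.contDiff).comp (hf.fderiv_right (by norm_num))

lemma fderiv_gradient_eq {f : E → ℝ} (x : E) :
    fderiv ℝ (gradient f) x =
      ((dIso E).toContinuousLinearMap).comp (fderiv ℝ (fderiv ℝ f) x) := by
  rw [gradient_eq_dIso]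
  exact (dIso E).comp_fderiv

lemma hess_symm {f : E → ℝ} (hf : ContDiff ℝ 2 f) (x u v : E) :
    ⟪fderiv ℝ (gradient f) x u, v⟫ = ⟪u, fderiv ℝ (gradient f) x v⟫ := by
  have hs := (hf.contDiffAt (x := x)).isSymmSndFDerivAt (by norm_num)
  rw [fderiv_gradient_eq]
  simp only [ContinuousLinearMap.comp_apply, ContinuousLinearEquiv.coe_coe]
  rw [inner_dIso, real_inner_comm ((dIso E) ((fderiv ℝ (fderiv ℝ f) x) v)) u, inner_dIso]
  exact hs u v

lemma intApply (g : ℝ → (E →L[ℝ] E)) (hg : Continuous g) (v : E) :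
    (∫ x in (0:ℝ)..1, g x) v = ∫ x in (0:ℝ)..1, g x v := by
  rw [intervalIntegral.integral_of_le zero_le_one,
    intervalIntegral.integral_of_le zero_le_one]
  exact ContinuousLinearMap.integral_apply (hg.integrableOn_Icc.mono_set Set.Ioc_subset_Icc_self) v

lemma intInner (g : ℝ → E) (hg : Continuous g) (v : E) :
    ⟪v, ∫ x in (0:ℝ)..1, g x⟫ = ∫ x in (0:ℝ)..1, ⟪v, g x⟫ := by
  rw [intervalIntegral.integral_of_le zero_le_one,
    intervalIntegral.integral_of_le zero_le_one]
  exact (integral_inner (hg.integrableOn_Icc.mono_set Set.Ioc_subset_Icc_self) v).symm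

lemma ftc_seg (g : E → E) (hg : ContDiff ℝ 1 g) (a b : E) :
    g b - g a = ∫ x in (0:ℝ)..1, fderiv ℝ g (a + x • (b - a)) (b - a) := by
  have hline : ∀ x : ℝ, HasDerivAt (fun t : ℝ => g (a + t • (b - a)))
      (fderiv ℝ g (a + x • (b - a)) (b - a)) x := by
    intro x
    have h1 : HasDerivAt (fun t : ℝ => a + t • (b - a)) (b - a) x := by
      simpa using ((hasDerivAt_id x).smul_const (b - a)).const_add a
    exact ((hg.differentiable one_ne_zero).differentiableAt.hasFDerivAt.comp_hasDerivAt x h1)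
  have hcont : Continuous (fun x : ℝ => fderiv ℝ g (a + x • (b - a)) (b - a)) := by
    apply (ContinuousLinearMap.apply ℝ E (b - a)).continuous.comp
    exact (hg.continuous_fderiv one_ne_zero).comp (by fun_prop)
  have := intervalIntegral.integral_eq_sub_of_hasDerivAt (fun x _ => hline x)
    (hcont.intervalIntegrable 0 1)
  rw [this]
  simp

lemma cs_psd (A : E →L[ℝ] E) (hsymm : ∀ x y : E, ⟪A x, y⟫ = ⟪x, A y⟫)
    (hpos : ∀ v : E, 0 ≤ ⟪v, A v⟫) (u v : E) :
    ⟪u, A v⟫ ^ 2 ≤ ⟪u, A u⟫ * ⟪v, A v⟫ := by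
  have key : ∀ t : ℝ, 0 ≤ ⟪v, A v⟫ * (t * t) + (2 * ⟪u, A v⟫) * t + ⟪u, A u⟫ := by
    intro t
    have h := hpos (u + t • v)
    have expand : ⟪u + t • v, A (u + t • v)⟫
        = ⟪v, A v⟫ * (t * t) + (2 * ⟪u, A v⟫) * t + ⟪u, A u⟫ := by
      have hAuv : ⟪v, A u⟫ = ⟪u, A v⟫ := by rw [← hsymm]; exact real_inner_comm _ _
      simp only [map_add, ContinuousLinearMap.map_smul, inner_add_left, inner_add_right,
        real_inner_smul_left, real_inner_smul_right]
      rw [hAuv]; ring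
    linarith [h, expand ▸ h]
  have hd := discrim_le_zero key
  unfold discrim at hd
  nlinarith [hd]

lemma sq_norm_apply_le (A : E →L[ℝ] E) (hsymm : ∀ x y : E, ⟪A x, y⟫ = ⟪x, A y⟫)
    (hpos : ∀ v : E, 0 ≤ ⟪v, A v⟫) (c : ℝ) (hc : 0 ≤ c)
    (hup : ∀ v : E, ⟪v, A v⟫ ≤ c * ‖v‖ ^ 2) (v : E) :
    ‖A v‖ ^ 2 ≤ c * ⟪v, A v⟫ := by
  have h1 := cs_psd A hsymm hpos (A v) v
  have h2 : ⟪A v, A v⟫ = ‖A v‖ ^ 2 := real_inner_self_eq_norm_sq _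
  have h3 : ⟪A v, A (A v)⟫ ≤ c * ‖A v‖ ^ 2 := hup (A v)
  by_cases hz : ‖A v‖ = 0
  · have : A v = 0 := norm_eq_zero.mp hz
    rw [this]
    simp
  · have hz2 : 0 < ‖A v‖ ^ 2 := by positivity
    nlinarith [hpos v, hpos (A v)]

lemma contract_step (H : E →L[ℝ] E) (hsymm : ∀ x y : E, ⟪H x, y⟫ = ⟪x, H y⟫)
    (μ L η : ℝ) (hμ : 0 < μ) (hμL : μ ≤ L) (hη : 0 < η) (hη2 : η ≤ 2 / (L + μ))
    (hlow : ∀ v : E, μ * ‖v‖ ^ 2 ≤ ⟪v, H v⟫) (hup : ∀ v : E, ⟪v, H v⟫ ≤ L * ‖v‖ ^ 2)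
    (v : E) : ‖v - η • H v‖ ≤ (1 - η * μ) * ‖v‖ := by
  have hLμ : 0 < L + μ := by linarith
  have hη3 : η * (L + μ) ≤ 2 := (le_div_iff₀ hLμ).mp hη2
  have hημ : η * μ ≤ 1 := by nlinarith
  set A : E →L[ℝ] E := H - μ • ContinuousLinearMap.id ℝ E with hA
  have hAv : ∀ u : E, A u = H u - μ • u := fun u => rfl
  have hAsymm : ∀ x y : E, ⟪A x, y⟫ = ⟪x, A y⟫ := by
    intro x y
    rw [hAv, hAv, inner_sub_left, inner_sub_right, hsymm, real_inner_smul_left,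
      real_inner_smul_right]
  have hApos : ∀ u : E, 0 ≤ ⟪u, A u⟫ := by
    intro u
    rw [hAv, inner_sub_right, real_inner_smul_right, real_inner_self_eq_norm_sq]
    linarith [hlow u]
  have hAup : ∀ u : E, ⟪u, A u⟫ ≤ (L - μ) * ‖u‖ ^ 2 := by
    intro u
    rw [hAv, inner_sub_right, real_inner_smul_right, real_inner_self_eq_norm_sq]
    linarith [hup u]
  have key : ‖A v‖ ^ 2 ≤ (L - μ) * ⟪v, A v⟫ :=
    sq_norm_apply_le A hAsymm hApos (L - μ) (by linarith) hAup v
  have veq : v - η • H v = (1 - η * μ) • v - η • A v := by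
    rw [hAv]; module
  have hnormsq : ‖v - η • H v‖ ^ 2 ≤ ((1 - η * μ) * ‖v‖) ^ 2 := by
    rw [veq, norm_sub_sq_real]
    rw [real_inner_smul_left, real_inner_smul_right, norm_smul, norm_smul]
    have h1 : |1 - η * μ| = 1 - η * μ := abs_of_nonneg (by linarith)
    have h2 : |η| = η := abs_of_nonneg hη.le
    rw [Real.norm_eq_abs, Real.norm_eq_abs, h1, h2]
    nlinarith [mul_le_mul_of_nonneg_left key (sq_nonneg η),
      mul_le_mul_of_nonneg_right hη3 (mul_nonneg hη.le (hApos v)), hApos v]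
  have h0 : 0 ≤ (1 - η * μ) * ‖v‖ := mul_nonneg (by linarith) (norm_nonneg _)
  exact (pow_le_pow_iff_left₀ (norm_nonneg _) h0 two_ne_zero).mp hnormsq

lemma one_step {E : Type*} [NormedAddCommGroup E] [InnerProductSpace ℝ E] [CompleteSpace E]
    (n r : ℕ) (μ L η ξ c₂ : ℝ) (hμ : 0 < μ) (hμL : μ ≤ L) (hη : 0 < η) (hη2 : η ≤ 2 / (L + μ))
    (hξ0 : 0 ≤ ξ) (hn0 : 0 < (n : ℝ)) (hm : 0 < (n : ℝ) - r) (hrn : r ≤ n)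
    (Fi : Fin n → E → ℝ) (hFi : ∀ i, ContDiff ℝ 2 (Fi i))
    (hlow : ∀ i, ∀ x v : E, μ * ‖v‖ ^ 2 ≤ ⟪v, fderiv ℝ (gradient (Fi i)) x v⟫)
    (hup : ∀ i, ∀ x v : E, ⟪v, fderiv ℝ (gradient (Fi i)) x v⟫ ≤ L * ‖v‖ ^ 2)
    (F : E → ℝ) (hF : F = fun x => (1 / n : ℝ) * ∑ i, Fi i x)
    (R : Finset (Fin n)) (hR : R.card = r)
    (a b : E) (Bt : E →L[ℝ] E)
    (hBt : ‖Bt - ∫ x in (0:ℝ)..1, fderiv ℝ (gradient F) (a + x • (b - a))‖ ≤ ξ)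
    (hc2 : ∀ i, ‖gradient (Fi i) a‖ ≤ c₂) :
    ‖(b - (η / ((n : ℝ) - r)) • ((n : ℝ) • (Bt (b - a) + gradient F a)
        - ∑ i ∈ R, gradient (Fi i) b)) - (a - η • gradient F a)‖
      ≤ (1 - η * μ) * ‖b - a‖ + (η / ((n : ℝ) - r)) * ((n : ℝ) * (ξ * ‖b - a‖))
        + (η / ((n : ℝ) - r)) * (2 * r * c₂) := by
  have hn' : (n : ℝ) ≠ 0 := ne_of_gt hn0
  have hm' : (n : ℝ) - r ≠ 0 := ne_of_gt hm
  have hc₂0 : 0 ≤ c₂ := by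
    have hn1 : 0 < n := by exact_mod_cast hn0
    exact le_trans (norm_nonneg _) (hc2 ⟨0, hn1⟩)
  have hFc : ContDiff ℝ 2 F := by
    rw [hF]; exact contDiff_const.mul (ContDiff.sum fun i _ => hFi i)
  have hgc1 : ∀ i, ContDiff ℝ 1 (gradient (Fi i)) := fun i => contDiff_gradient (hFi i)
  have hgFc1 : ContDiff ℝ 1 (gradient F) := contDiff_gradient hFc
  have hcontHi : ∀ i, Continuous fun x : ℝ => fderiv ℝ (gradient (Fi i)) (a + x • (b - a)) :=
    fun i => ((hgc1 i).continuous_fderiv one_ne_zero).comp (by fun_prop)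
  have hcontHF : Continuous fun x : ℝ => fderiv ℝ (gradient F) (a + x • (b - a)) :=
    (hgFc1.continuous_fderiv one_ne_zero).comp (by fun_prop)
  -- gradient decomposition
  have hgradF : ∀ x, gradient F x = (1 / n : ℝ) • ∑ i, gradient (Fi i) x := by
    intro x
    have hdF : fderiv ℝ F x = (1 / n : ℝ) • ∑ i, fderiv ℝ (Fi i) x := by
      rw [hF, fderiv_const_mul (DifferentiableAt.fun_sum fun i _ =>
        ((hFi i).differentiable two_ne_zero).differentiableAt),
        fderiv_fun_sum fun i _ => ((hFi i).differentiable two_ne_zero).differentiableAt]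
    show dIso E (fderiv ℝ F x) = (1 / n : ℝ) • ∑ i, dIso E (fderiv ℝ (Fi i) x)
    rw [hdF, _root_.map_smul, map_sum]
  have hfdgF : ∀ x, fderiv ℝ (gradient F) x
      = (1 / n : ℝ) • ∑ i, fderiv ℝ (gradient (Fi i)) x := by
    intro x
    have h1 : gradient F = fun y => (1 / n : ℝ) • ∑ i, gradient (Fi i) y := funext hgradF
    rw [h1, fderiv_fun_const_smul (DifferentiableAt.fun_sum fun i _ =>
      ((hgc1 i).differentiable one_ne_zero).differentiableAt),
      fderiv_fun_sum fun i _ => ((hgc1 i).differentiable one_ne_zero).differentiableAt]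
  -- the averaged Hessians
  set Hbar : E →L[ℝ] E := ∫ x in (0:ℝ)..1, fderiv ℝ (gradient F) (a + x • (b - a))
    with hHbardef
  set G : Fin n → E →L[ℝ] E :=
    fun i => ∫ x in (0:ℝ)..1, fderiv ℝ (gradient (Fi i)) (a + x • (b - a)) with hGdef
  have hInt : ∀ i, IntervalIntegrable
      (fun x => fderiv ℝ (gradient (Fi i)) (a + x • (b - a))) volume 0 1 :=
    fun i => (hcontHi i).intervalIntegrable 0 1
  have hHbarG : (n : ℝ) • Hbar = ∑ i, G i := by
    have h1 : Hbar = (1 / n : ℝ) • ∑ i, G i := by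
      rw [hHbardef]
      calc (∫ x in (0:ℝ)..1, fderiv ℝ (gradient F) (a + x • (b - a)))
          = ∫ x in (0:ℝ)..1,
              (1 / n : ℝ) • ∑ i, fderiv ℝ (gradient (Fi i)) (a + x • (b - a)) := by
            apply intervalIntegral.integral_congr
            intro x hx
            exact hfdgF _
        _ = (1 / n : ℝ) • ∫ x in (0:ℝ)..1,
              ∑ i, fderiv ℝ (gradient (Fi i)) (a + x • (b - a)) := by
            rw [intervalIntegral.integral_smul]
        _ = (1 / n : ℝ) • ∑ i, G i := by
            rw [intervalIntegral.integral_finset_sum fun i _ => hInt i]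
    rw [h1, smul_smul]
    rw [show (n : ℝ) * (1 / n) = 1 by field_simp]
    rw [one_smul]
  have hGapply : ∀ i (v : E), G i v
      = ∫ x in (0:ℝ)..1, fderiv ℝ (gradient (Fi i)) (a + x • (b - a)) v :=
    fun i v => intApply _ (hcontHi i) v
  have hGinner : ∀ i (u v : E), ⟪u, G i v⟫
      = ∫ x in (0:ℝ)..1, ⟪u, fderiv ℝ (gradient (Fi i)) (a + x • (b - a)) v⟫ := by
    intro i u v
    rw [hGapply]
    exact intInner _ ((ContinuousLinearMap.apply ℝ E v).continuous.comp (hcontHi i)) u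
  have hGsymm : ∀ i (u v : E), ⟪G i u, v⟫ = ⟪u, G i v⟫ := by
    intro i u v
    rw [real_inner_comm v (G i u), hGinner i v u, hGinner i u v]
    apply intervalIntegral.integral_congr
    intro x hx
    dsimp only
    rw [← hess_symm (hFi i)]
    exact real_inner_comm _ _
  have hGlow : ∀ i (v : E), μ * ‖v‖ ^ 2 ≤ ⟪v, G i v⟫ := by
    intro i v
    rw [hGinner]
    have h0 : μ * ‖v‖ ^ 2 = ∫ x in (0:ℝ)..1, μ * ‖v‖ ^ 2 := by simp
    rw [h0]
    apply intervalIntegral.integral_mono_on zero_le_one intervalIntegrable_const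
    · exact (Continuous.inner continuous_const
        ((ContinuousLinearMap.apply ℝ E v).continuous.comp (hcontHi i))).intervalIntegrable 0 1
    · exact fun x _ => hlow i _ v
  have hGup : ∀ i (v : E), ⟪v, G i v⟫ ≤ L * ‖v‖ ^ 2 := by
    intro i v
    rw [hGinner]
    have h0 : L * ‖v‖ ^ 2 = ∫ x in (0:ℝ)..1, L * ‖v‖ ^ 2 := by simp
    rw [h0]
    apply intervalIntegral.integral_mono_on zero_le_one
    · exact (Continuous.inner continuous_const
        ((ContinuousLinearMap.apply ℝ E v).continuous.comp (hcontHi i))).intervalIntegrable 0 1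
    · exact intervalIntegrable_const
    · exact fun x _ => hup i _ v
  -- the leave-out sum S
  set S : E →L[ℝ] E := ∑ i ∈ Rᶜ, G i with hSdef
  have hcard : ((Rᶜ : Finset (Fin n)).card : ℝ) = (n : ℝ) - r := by
    rw [Finset.card_compl, hR, Fintype.card_fin, Nat.cast_sub hrn]
  have hSinner : ∀ u v : E, ⟪u, S v⟫ = ∑ i ∈ Rᶜ, ⟪u, G i v⟫ := by
    intro u v
    rw [hSdef, ContinuousLinearMap.sum_apply, inner_sum]
  have hSsymm : ∀ u v : E, ⟪S u, v⟫ = ⟪u, S v⟫ := by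
    intro u v
    rw [real_inner_comm v (S u), hSinner v u, hSinner u v]
    exact Finset.sum_congr rfl fun i _ => by
      rw [← hGsymm i]
      exact real_inner_comm _ _
  -- the normalized operator Hc
  set Hc : E →L[ℝ] E := (((n : ℝ) - r)⁻¹) • S with hHcdef
  have hHcsymm : ∀ u v : E, ⟪Hc u, v⟫ = ⟪u, Hc v⟫ := by
    intro u v
    rw [hHcdef]
    simp only [ContinuousLinearMap.smul_apply, real_inner_smul_left, real_inner_smul_right]
    rw [hSsymm]
  have hminv : 0 < ((n : ℝ) - r)⁻¹ := inv_pos.mpr hm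
  have hHclow : ∀ v : E, μ * ‖v‖ ^ 2 ≤ ⟪v, Hc v⟫ := by
    intro v
    have h1 : (Rᶜ : Finset (Fin n)).card • (μ * ‖v‖ ^ 2) ≤ ∑ i ∈ Rᶜ, ⟪v, G i v⟫ :=
      Finset.card_nsmul_le_sum _ _ _ fun i _ => hGlow i v
    rw [nsmul_eq_mul, hcard] at h1
    rw [hHcdef]
    simp only [ContinuousLinearMap.smul_apply, real_inner_smul_right]
    rw [hSinner]
    have hic : ((n:ℝ) - r)⁻¹ * (((n:ℝ) - r) * (μ * ‖v‖ ^ 2)) = μ * ‖v‖ ^ 2 := by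
      field_simp
    calc μ * ‖v‖ ^ 2 = ((n:ℝ) - r)⁻¹ * (((n:ℝ) - r) * (μ * ‖v‖ ^ 2)) := hic.symm
      _ ≤ ((n:ℝ) - r)⁻¹ * ∑ i ∈ Rᶜ, ⟪v, G i v⟫ :=
          mul_le_mul_of_nonneg_left h1 hminv.le
  have hHcup : ∀ v : E, ⟪v, Hc v⟫ ≤ L * ‖v‖ ^ 2 := by
    intro v
    have h1 : ∑ i ∈ Rᶜ, ⟪v, G i v⟫ ≤ (Rᶜ : Finset (Fin n)).card • (L * ‖v‖ ^ 2) :=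
      Finset.sum_le_card_nsmul _ _ _ fun i _ => hGup i v
    rw [nsmul_eq_mul, hcard] at h1
    rw [hHcdef]
    simp only [ContinuousLinearMap.smul_apply, real_inner_smul_right]
    rw [hSinner]
    have hic : ((n:ℝ) - r)⁻¹ * (((n:ℝ) - r) * (L * ‖v‖ ^ 2)) = L * ‖v‖ ^ 2 := by
      field_simp
    calc ((n:ℝ) - r)⁻¹ * ∑ i ∈ Rᶜ, ⟪v, G i v⟫
        ≤ ((n:ℝ) - r)⁻¹ * (((n:ℝ) - r) * (L * ‖v‖ ^ 2)) :=
          mul_le_mul_of_nonneg_left h1 hminv.le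
      _ = L * ‖v‖ ^ 2 := hic
  -- FTC
  have hftc : ∀ i, gradient (Fi i) b - gradient (Fi i) a = G i (b - a) := by
    intro i
    rw [hGapply]
    exact ftc_seg _ (hgc1 i) a b
  -- recursion identity
  have hsum1 : ∑ i ∈ R, gradient (Fi i) b
      = ∑ i ∈ R, gradient (Fi i) a + (∑ i ∈ R, G i) (b - a) := by
    rw [ContinuousLinearMap.sum_apply, ← Finset.sum_add_distrib]
    exact Finset.sum_congr rfl fun i _ => by rw [← hftc i]; abel
  have hsum2 : S (b - a) + (∑ i ∈ R, G i) (b - a) = (n : ℝ) • (Hbar (b - a)) := by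
    have h1 : S + ∑ i ∈ R, G i = (n : ℝ) • Hbar := by
      rw [hSdef, hHbarG]
      exact Finset.sum_compl_add_sum R G
    calc S (b - a) + (∑ i ∈ R, G i) (b - a) = (S + ∑ i ∈ R, G i) (b - a) := by
          rw [ContinuousLinearMap.add_apply]
      _ = ((n : ℝ) • Hbar) (b - a) := by rw [h1]
      _ = (n : ℝ) • (Hbar (b - a)) := rfl
  have hXeq : (n : ℝ) • (Bt (b - a) + gradient F a) - ∑ i ∈ R, gradient (Fi i) b
      = ((n : ℝ) - r) • gradient F a + (S (b - a) + (n : ℝ) • ((Bt - Hbar) (b - a))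
        + ∑ i ∈ R, (gradient F a - gradient (Fi i) a)) := by
    rw [hsum1]
    have hBH : (Bt - Hbar) (b - a) = Bt (b - a) - Hbar (b - a) := rfl
    have h2 : (∑ i ∈ R, G i) (b - a) = (n : ℝ) • (Hbar (b - a)) - S (b - a) := by
      rw [← hsum2]; abel
    rw [hBH, h2, Finset.sum_sub_distrib, Finset.sum_const, hR,
      ← Nat.cast_smul_eq_nsmul ℝ r (gradient F a)]
    module
  have key : (b - (η / ((n : ℝ) - r)) • ((n : ℝ) • (Bt (b - a) + gradient F a)
        - ∑ i ∈ R, gradient (Fi i) b)) - (a - η • gradient F a)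
      = ((b - a) - η • Hc (b - a))
        - (η / ((n : ℝ) - r)) • ((n : ℝ) • ((Bt - Hbar) (b - a)))
        - (η / ((n : ℝ) - r)) • (∑ i ∈ R, (gradient F a - gradient (Fi i) a)) := by
    rw [hXeq]
    have hmgF : (η / ((n : ℝ) - r)) • (((n : ℝ) - r) • gradient F a) = η • gradient F a := by
      rw [smul_smul, div_mul_cancel₀ _ hm']
    have hHcd : η • Hc (b - a) = (η / ((n : ℝ) - r)) • (S (b - a)) := by
      rw [hHcdef]
      simp only [ContinuousLinearMap.smul_apply]
      rw [smul_smul, div_eq_mul_inv]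
    rw [hHcd]
    simp only [smul_add]
    rw [hmgF]
    abel
  rw [key]
  have hBtHbar : ‖(Bt - Hbar) (b - a)‖ ≤ ξ * ‖b - a‖ :=
    le_trans ((Bt - Hbar).le_opNorm _) (mul_le_mul_of_nonneg_right hBt (norm_nonneg _))
  have hgFnorm : ‖gradient F a‖ ≤ c₂ := by
    rw [hgradF a]
    calc ‖(1 / n : ℝ) • ∑ i, gradient (Fi i) a‖
        = (1 / n : ℝ) * ‖∑ i, gradient (Fi i) a‖ := by
          rw [norm_smul, Real.norm_eq_abs, abs_of_nonneg (by positivity)]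
      _ ≤ (1 / n : ℝ) * ∑ i, ‖gradient (Fi i) a‖ :=
          mul_le_mul_of_nonneg_left (norm_sum_le _ _) (by positivity)
      _ ≤ (1 / n : ℝ) * ((n : ℝ) * c₂) := by
          apply mul_le_mul_of_nonneg_left _ (by positivity)
          have := Finset.sum_le_card_nsmul Finset.univ (fun i => ‖gradient (Fi i) a‖) c₂
            (fun i _ => hc2 i)
          rwa [Finset.card_univ, Fintype.card_fin, nsmul_eq_mul] at this
      _ = c₂ := by field_simp
  have hsumRnorm : ‖∑ i ∈ R, (gradient F a - gradient (Fi i) a)‖ ≤ 2 * r * c₂ := by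
    apply le_trans (norm_sum_le _ _)
    have h1 : ∑ i ∈ R, ‖gradient F a - gradient (Fi i) a‖ ≤ R.card • (c₂ + c₂) :=
      Finset.sum_le_card_nsmul _ _ _ fun i _ =>
        le_trans (norm_sub_le _ _) (add_le_add hgFnorm (hc2 i))
    rw [hR, nsmul_eq_mul] at h1
    linarith
  have hηm : 0 ≤ η / ((n : ℝ) - r) := le_of_lt (div_pos hη hm)
  calc ‖((b - a) - η • Hc (b - a))
        - (η / ((n : ℝ) - r)) • ((n : ℝ) • ((Bt - Hbar) (b - a)))
        - (η / ((n : ℝ) - r)) • (∑ i ∈ R, (gradient F a - gradient (Fi i) a))‖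
      ≤ ‖((b - a) - η • Hc (b - a))
          - (η / ((n : ℝ) - r)) • ((n : ℝ) • ((Bt - Hbar) (b - a)))‖
        + ‖(η / ((n : ℝ) - r)) • (∑ i ∈ R, (gradient F a - gradient (Fi i) a))‖ :=
        norm_sub_le _ _
    _ ≤ ‖(b - a) - η • Hc (b - a)‖
        + ‖(η / ((n : ℝ) - r)) • ((n : ℝ) • ((Bt - Hbar) (b - a)))‖
        + ‖(η / ((n : ℝ) - r)) • (∑ i ∈ R, (gradient F a - gradient (Fi i) a))‖ := by
        have := norm_sub_le ((b - a) - η • Hc (b - a))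
          ((η / ((n : ℝ) - r)) • ((n : ℝ) • ((Bt - Hbar) (b - a))))
        linarith
    _ ≤ (1 - η * μ) * ‖b - a‖ + (η / ((n : ℝ) - r)) * ((n : ℝ) * (ξ * ‖b - a‖))
        + (η / ((n : ℝ) - r)) * (2 * r * c₂) := by
        have e1 : ‖(b - a) - η • Hc (b - a)‖ ≤ (1 - η * μ) * ‖b - a‖ :=
          contract_step Hc hHcsymm μ L η hμ hμL hη hη2 hHclow hHcup (b - a)
        have e2 : ‖(η / ((n : ℝ) - r)) • ((n : ℝ) • ((Bt - Hbar) (b - a)))‖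
            ≤ (η / ((n : ℝ) - r)) * ((n : ℝ) * (ξ * ‖b - a‖)) := by
          rw [norm_smul, norm_smul, Real.norm_eq_abs, Real.norm_eq_abs,
            abs_of_nonneg hηm, abs_of_nonneg hn0.le]
          exact mul_le_mul_of_nonneg_left
            (mul_le_mul_of_nonneg_left hBtHbar hn0.le) hηm
        have e3 : ‖(η / ((n : ℝ) - r)) • (∑ i ∈ R, (gradient F a - gradient (Fi i) a))‖
            ≤ (η / ((n : ℝ) - r)) * (2 * r * c₂) := by
          rw [norm_smul, Real.norm_eq_abs, abs_of_nonneg hηm]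
          exact mul_le_mul_of_nonneg_left hsumRnorm hηm
        linarith

end aux

theorem stmt_10 (p n r : ℕ) (hr : 1 ≤ r) (μ L η ξ c₂ : ℝ)
    (hμ : 0 < μ) (hμL : μ ≤ L) (hrn : (r : ℝ) / n < 1 / 2)
    (Fi : Fin n → EuclideanSpace ℝ (Fin p) → ℝ) (hFi : ∀ i, ContDiff ℝ 2 (Fi i))
    (hlow : ∀ i, ∀ x v : EuclideanSpace ℝ (Fin p),
      μ * ‖v‖ ^ 2 ≤ ⟪v, fderiv ℝ (gradient (Fi i)) x v⟫)
    (hup : ∀ i, ∀ x v : EuclideanSpace ℝ (Fin p),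
      ⟪v, fderiv ℝ (gradient (Fi i)) x v⟫ ≤ L * ‖v‖ ^ 2)
    (F : EuclideanSpace ℝ (Fin p) → ℝ) (hF : ∀ x, F x = (1 / n : ℝ) * ∑ i, Fi i x)
    (R : Finset (Fin n)) (hR : R.card = r)
    (hη : 0 < η) (hη2 : η ≤ 2 / (L + μ)) (hξ0 : 0 ≤ ξ) (hξ : ξ ≤ μ / 2)
    (w iw : ℕ → EuclideanSpace ℝ (Fin p))
    (B : ℕ → EuclideanSpace ℝ (Fin p) →L[ℝ] EuclideanSpace ℝ (Fin p))
    (hw : ∀ t, w (t + 1) = w t - η • gradient F (w t))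
    (hi0 : iw 0 = w 0)
    (hiw : ∀ t, iw (t + 1) = iw t - (η / ((n : ℝ) - r)) •
        ((n : ℝ) • (B t (iw t - w t) + gradient F (w t))
          - ∑ i ∈ R, gradient (Fi i) (iw t)))
    (hBsymm : ∀ t, ∀ x y : EuclideanSpace ℝ (Fin p), ⟪B t x, y⟫ = ⟪x, B t y⟫)
    (hB : ∀ t, ‖B t - ∫ x in (0:ℝ)..1,
        fderiv ℝ (gradient F) (w t + x • (iw t - w t))‖ ≤ ξ)
    (hc : ∀ i t, ‖gradient (Fi i) (w t)‖ ≤ c₂) :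
    ∀ t, ‖iw t - w t‖ ≤ (2 * r * c₂ / n) / ((1 - (r : ℝ) / n) * μ - ξ) ∧
      ‖iw t - w t‖ ≤ (1 / (1 / 2 - (r : ℝ) / n)) * (2 * c₂ / μ) * ((r : ℝ) / n) := by
  have hrn' : r ≤ n := by
    simpa [hR] using Finset.card_le_univ R
  have hn0 : 0 < n := lt_of_lt_of_le hr hrn'
  have hn0' : (0 : ℝ) < n := by exact_mod_cast hn0
  have hr0 : (0 : ℝ) ≤ r := Nat.cast_nonneg r
  have h2r : 2 * (r : ℝ) < n := by
    have := (div_lt_div_iff₀ hn0' (by norm_num : (0:ℝ) < 2)).mp hrn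
    linarith
  have hm : (0 : ℝ) < (n : ℝ) - r := by linarith
  have hc₂0 : 0 ≤ c₂ := le_trans (norm_nonneg _) (hc ⟨0, hn0⟩ 0)
  have hhalf : (0 : ℝ) < 1 / 2 - (r : ℝ) / n := by
    have : (r : ℝ) / n < 1 / 2 := hrn
    linarith
  have hD : 0 < (1 - (r : ℝ) / n) * μ - ξ := by
    nlinarith [mul_pos hhalf hμ]
  have hM0 : 0 ≤ (2 * r * c₂ / n) / ((1 - (r : ℝ) / n) * μ - ξ) :=
    div_nonneg (by positivity) hD.le
  have hMeq : ((2 * r * c₂ / n) / ((1 - (r : ℝ) / n) * μ - ξ))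
      * (((n : ℝ) - r) * μ - n * ξ) = 2 * r * c₂ := by
    have h2 : ((n : ℝ) - r) * μ - n * ξ = n * ((1 - (r : ℝ) / n) * μ - ξ) := by
      field_simp
    have hX : ((n : ℝ) - r) * μ - n * ξ ≠ 0 := by
      rw [h2]; exact ne_of_gt (mul_pos hn0' hD)
    rw [h2]
    field_simp
  have main : ∀ t, ‖iw t - w t‖
      ≤ (2 * r * c₂ / n) / ((1 - (r : ℝ) / n) * μ - ξ) := by
    intro t
    induction t with
    | zero => rw [hi0]; simpa using hM0
    | succ t ih =>
      have hstep := one_step n r μ L η ξ c₂ hμ hμL hη hη2 hξ0 hn0' hm hrn'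
        Fi hFi hlow hup F (funext hF) R hR (w t) (iw t) (B t) (hB t) (fun i => hc i t)
      rw [hiw t, hw t]
      refine le_trans hstep ?_
      set M := (2 * r * c₂ / n) / ((1 - (r : ℝ) / n) * μ - ξ) with hMdef
      have hLμ : 0 < L + μ := by linarith
      have hη3 : η * (L + μ) ≤ 2 := (le_div_iff₀ hLμ).mp hη2
      have h1 : 0 ≤ 1 - η * μ := by nlinarith
      have c1 : (1 - η * μ) * ‖iw t - w t‖ ≤ (1 - η * μ) * M :=
        mul_le_mul_of_nonneg_left ih h1
      have hηm : 0 ≤ η / ((n : ℝ) - r) := le_of_lt (div_pos hη hm)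
      have c2 : (η / ((n : ℝ) - r)) * ((n : ℝ) * (ξ * ‖iw t - w t‖))
          ≤ (η / ((n : ℝ) - r)) * ((n : ℝ) * (ξ * M)) := by gcongr
      have hexp : (η / ((n : ℝ) - r)) * ((n : ℝ) * (ξ * M))
          + (η / ((n : ℝ) - r)) * (M * (((n : ℝ) - r) * μ - n * ξ)) = η * μ * M := by
        field_simp
        ring
      have hc3 : (η / ((n : ℝ) - r)) * (2 * r * c₂)
          = (η / ((n : ℝ) - r)) * (M * (((n : ℝ) - r) * μ - n * ξ)) := by
        rw [hMeq]
      linarith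
  intro t
  refine ⟨main t, le_trans (main t) ?_⟩
  have hDD : (1 / 2 - (r : ℝ) / n) * μ ≤ (1 - (r : ℝ) / n) * μ - ξ := by nlinarith
  have step1 : (2 * r * c₂ / n) / ((1 - (r : ℝ) / n) * μ - ξ)
      ≤ (2 * r * c₂ / n) / ((1 / 2 - (r : ℝ) / n) * μ) := by
    gcongr
  refine le_trans step1 (le_of_eq ?_)
  field_simp
end

section
/- Let n ≥ 1, for i = 1,…,n let F_i : ℝ^p → ℝ be twice continuously differentiable with μ‖v‖² ≤ ⟨v, ∇²F_i(x) v⟩ ≤ L‖v‖² for all x, v (0 < μ ≤ L), and let 0 < η ≤ 2/(L+μ). Let R ⊆ {1,…,n}, let (𝓑_t)_{t≥0} be a sequence of subsets of {1,…,n} each of size B ≥ 1, and set ΔB_t = |𝓑_t ∩ R|. Assume ΔB_t < B and ΔB_t/B ≤ ρ for all t, where 0 ≤ ρ < 1. Define sequences from a common initialization sw₀ = usw₀: sw_{t+1} = sw_t − (η/B) Σ_{i∈𝓑_t} ∇F_i(sw_t) and usw_{t+1} = usw_t − (η/(B−ΔB_t)) Σ_{i∈𝓑_t, i∉R} ∇F_i(usw_t).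 If ‖∇F_i(usw_t)‖ ≤ c₂ for all i and t, then for every t, ‖sw_t − usw_t‖ ≤ (2c₂/μ)·ρ. -/
open scoped RealInnerProductSpace

lemma key_op {E : Type*} [NormedAddCommGroup E] [InnerProductSpace ℝ E]
    (A : E →L[ℝ] E) (μ L η : ℝ) (hμ : 0 < μ) (hμL : μ ≤ L)
    (hη : 0 < η) (hη2 : η * (L + μ) ≤ 2)
    (hsymm : ∀ u v : E, ⟪u, A v⟫ = ⟪v, A u⟫)
    (hlow : ∀ v : E, μ * ‖v‖ ^ 2 ≤ ⟪v, A v⟫)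
    (hup : ∀ v : E, ⟪v, A v⟫ ≤ L * ‖v‖ ^ 2)
    (v : E) : ‖v - η • A v‖ ≤ (1 - η * μ) * ‖v‖ := by
  have hημ : η * μ ≤ 1 := by nlinarith
  set w : E := A v - μ • v with hw
  set a : ℝ := ⟪v, A v⟫ - μ * ‖v‖ ^ 2 with ha
  have hva : ⟪v, w⟫ = a := by
    simp [hw, ha, inner_sub_right, real_inner_smul_right, real_inner_self_eq_norm_sq]
  have ha0 : 0 ≤ a := by have := hlow v; linarith
  have hquad : ∀ t : ℝ, 0 ≤ a - 2 * t * ‖w‖ ^ 2 + t ^ 2 * ((L - μ) * ‖w‖ ^ 2) := by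
    intro t
    have h1 : μ * ‖v - t • w‖ ^ 2 ≤ ⟪v - t • w, A (v - t • w)⟫ := hlow _
    have h2 : ⟪w, A w⟫ - μ * ‖w‖ ^ 2 ≤ (L - μ) * ‖w‖ ^ 2 := by
      have := hup w; linarith
    have hwv2 : ⟪w, A v⟫ = ‖w‖ ^ 2 + μ * a := by
      have e1 : ⟪w, A v - μ • v⟫ = ⟪w, A v⟫ - μ * ⟪w, v⟫ := by
        simp [inner_sub_right, real_inner_smul_right]
      rw [← hw, real_inner_self_eq_norm_sq] at e1
      have e2 : ⟪w, v⟫ = a := by rw [real_inner_comm]; exact hva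
      rw [e2] at e1; linarith
    have hns : ‖v - t • w‖ ^ 2 = ‖v‖ ^ 2 - 2 * t * ⟪v, w⟫ + t ^ 2 * ‖w‖ ^ 2 := by
      rw [@norm_sub_sq_real, norm_smul, real_inner_smul_right, mul_pow, Real.norm_eq_abs, sq_abs]
      ring
    have hinner : ⟪v - t • w, A (v - t • w)⟫
        = ⟪v, A v⟫ - 2 * t * ⟪w, A v⟫ + t ^ 2 * ⟪w, A w⟫ := by
      have hsym : ⟪v, A w⟫ = ⟪w, A v⟫ := hsymm v w
      simp [inner_sub_left, map_sub, inner_sub_right, map_smul, inner_smul_left,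
        inner_smul_right, real_inner_smul_left, real_inner_smul_right]
      rw [hsym]; ring
    have hexp : ⟪v - t • w, A (v - t • w)⟫ - μ * ‖v - t • w‖ ^ 2
        = a - 2 * t * ‖w‖ ^ 2 + t ^ 2 * (⟪w, A w⟫ - μ * ‖w‖ ^ 2) := by
      rw [hinner, hns, hva, hwv2, ha]; ring
    have h3 : 0 ≤ a - 2 * t * ‖w‖ ^ 2 + t ^ 2 * (⟪w, A w⟫ - μ * ‖w‖ ^ 2) := by
      rw [← hexp]; linarith
    nlinarith [sq_nonneg t]
  have hsle : ‖w‖ ^ 2 ≤ (L - μ) * a := by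
    rcases lt_or_eq_of_le hμL with hlt | heq
    · have hK : 0 < L - μ := by linarith
      have h := hquad ((L - μ)⁻¹)
      have e : a - 2 * (L - μ)⁻¹ * ‖w‖ ^ 2 + ((L - μ)⁻¹) ^ 2 * ((L - μ) * ‖w‖ ^ 2)
          = a - (L - μ)⁻¹ * ‖w‖ ^ 2 := by
        field_simp
        ring
      rw [e] at h
      have h' : (L - μ)⁻¹ * ‖w‖ ^ 2 ≤ a := by linarith
      calc ‖w‖ ^ 2 = (L - μ) * ((L - μ)⁻¹ * ‖w‖ ^ 2) := by field_simp
        _ ≤ (L - μ) * a := mul_le_mul_of_nonneg_left h' hK.le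
    · by_contra hcon
      push_neg at hcon
      rw [← heq, sub_self, zero_mul] at hcon
      have h := hquad ((a + 1) / (2 * ‖w‖ ^ 2))
      rw [← heq, sub_self, zero_mul, mul_zero] at h
      have e : 2 * ((a + 1) / (2 * ‖w‖ ^ 2)) * ‖w‖ ^ 2 = a + 1 := by
        have hne : 2 * ‖w‖ ^ 2 ≠ 0 := mul_ne_zero two_ne_zero hcon.ne'
        calc _ = (a + 1) * ((2 * ‖w‖ ^ 2) / (2 * ‖w‖ ^ 2)) := by ring
          _ = a + 1 := by rw [div_self hne, mul_one]
      linarith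
  have hAv : ‖A v‖ ^ 2 ≤ (L + μ) * a + μ ^ 2 * ‖v‖ ^ 2 := by
    have e0 : A v = w + μ • v := by simp [hw]
    rw [e0, @norm_add_sq_real]
    have e1 : ⟪w, μ • v⟫ = μ * a := by
      rw [real_inner_smul_right, real_inner_comm, hva]
    rw [e1]
    have e2 : ‖μ • v‖ ^ 2 = μ ^ 2 * ‖v‖ ^ 2 := by
      rw [norm_smul]; simp [mul_pow, sq_abs]
    rw [e2]
    nlinarith
  have hfin : ‖v - η • A v‖ ^ 2 ≤ ((1 - η * μ) * ‖v‖) ^ 2 := by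
    rw [@norm_sub_sq_real]
    have h1 : ⟪v, η • A v⟫ = η * (a + μ * ‖v‖ ^ 2) := by
      rw [real_inner_smul_right, ha]; ring
    have h2 : ‖η • A v‖ ^ 2 = η ^ 2 * ‖A v‖ ^ 2 := by
      rw [norm_smul]; simp [mul_pow, sq_abs]
    rw [h1, h2]
    nlinarith [mul_nonneg (mul_nonneg hη.le ha0) (sub_nonneg.mpr hη2),
      mul_le_mul_of_nonneg_left hAv (sq_nonneg η)]
  have h1 : 0 ≤ (1 - η * μ) * ‖v‖ := mul_nonneg (by linarith) (norm_nonneg _)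
  nlinarith [norm_nonneg (v - η • A v), hfin, h1,
    sq_nonneg (‖v - η • A v‖ + (1 - η * μ) * ‖v‖)]

open scoped RealInnerProductSpace
open InnerProductSpace

variable {E : Type*} [NormedAddCommGroup E] [InnerProductSpace ℝ E] [CompleteSpace E]

lemma grad_eq {F : E → ℝ} :
    gradient F = fun x => (toDual ℝ E).symm (fderiv ℝ F x) := rfl

lemma grad_diff {F : E → ℝ} (hf : ContDiff ℝ 2 F) :
    Differentiable ℝ (gradient F) := by
  rw [grad_eq]
  exact ((toDual ℝ E).symm.toContinuousLinearEquiv.toContinuousLinearMap.differentiable).comp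
    ((hf.fderiv_right (m := 1) (by norm_num)).differentiable one_ne_zero)

lemma grad_fderiv {F : E → ℝ} (hf : ContDiff ℝ 2 F) (x : E) :
    fderiv ℝ (gradient F) x
      = ((toDual ℝ E).symm.toContinuousLinearEquiv.toContinuousLinearMap).comp
          (fderiv ℝ (fderiv ℝ F) x) := by
  have hD : HasFDerivAt (fderiv ℝ F) (fderiv ℝ (fderiv ℝ F) x) x :=
    (((hf.fderiv_right (m := 1) (by norm_num)).differentiable one_ne_zero) x).hasFDerivAt
  have hg := ((toDual ℝ E).symm.toContinuousLinearEquiv.toContinuousLinearMap).hasFDerivAt.comp x hD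
  exact hg.fderiv

lemma grad_symm {F : E → ℝ} (hf : ContDiff ℝ 2 F) (x u v : E) :
    ⟪u, fderiv ℝ (gradient F) x v⟫ = ⟪v, fderiv ℝ (gradient F) x u⟫ := by
  rw [grad_fderiv hf]
  have key : ∀ z w : E, ⟪z, ((toDual ℝ E).symm.toContinuousLinearEquiv.toContinuousLinearMap).comp
      (fderiv ℝ (fderiv ℝ F) x) w⟫ = fderiv ℝ (fderiv ℝ F) x w z := by
    intro z w
    rw [real_inner_comm]
    exact toDual_symm_apply
  rw [key, key]
  exact (hf.contDiffAt.isSymmSndFDerivAt (by norm_num)) v u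

open scoped RealInnerProductSpace

theorem stmt_14 (p n B : ℕ) (hn : 1 ≤ n) (hB : 1 ≤ B) (μ L η c₂ ρ : ℝ)
    (hμ : 0 < μ) (hμL : μ ≤ L)
    (Fi : Fin n → EuclideanSpace ℝ (Fin p) → ℝ) (hFi : ∀ i, ContDiff ℝ 2 (Fi i))
    (hlow : ∀ i, ∀ x v : EuclideanSpace ℝ (Fin p),
      μ * ‖v‖ ^ 2 ≤ ⟪v, fderiv ℝ (gradient (Fi i)) x v⟫)
    (hup : ∀ i, ∀ x v : EuclideanSpace ℝ (Fin p),
      ⟪v, fderiv ℝ (gradient (Fi i)) x v⟫ ≤ L * ‖v‖ ^ 2)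
    (hη : 0 < η) (hη2 : η ≤ 2 / (L + μ))
    (R : Finset (Fin n)) (𝓑 : ℕ → Finset (Fin n)) (h𝓑 : ∀ t, (𝓑 t).card = B)
    (hΔB : ∀ t, (𝓑 t ∩ R).card < B)
    (hρ0 : 0 ≤ ρ) (hρ1 : ρ < 1)
    (hρ : ∀ t, ((𝓑 t ∩ R).card : ℝ) / B ≤ ρ)
    (sw usw : ℕ → EuclideanSpace ℝ (Fin p)) (h0 : sw 0 = usw 0)
    (hsw : ∀ t, sw (t + 1) = sw t - (η / B) • ∑ i ∈ 𝓑 t, gradient (Fi i) (sw t))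
    (husw : ∀ t, usw (t + 1) = usw t - (η / ((B : ℝ) - (𝓑 t ∩ R).card)) •
        ∑ i ∈ 𝓑 t \ R, gradient (Fi i) (usw t))
    (hc : ∀ i t, ‖gradient (Fi i) (usw t)‖ ≤ c₂) :
    ∀ t, ‖sw t - usw t‖ ≤ (2 * c₂ / μ) * ρ := by
  have hc₂ : 0 ≤ c₂ := le_trans (norm_nonneg _) (hc ⟨0, hn⟩ 0)
  have hLμ : 0 < L + μ := by linarith
  have hη2' : η * (L + μ) ≤ 2 := by
    rw [le_div_iff₀ hLμ] at hη2; linarith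
  have hημ1 : η * μ ≤ 1 := by nlinarith
  have h1ημ : 0 ≤ 1 - η * μ := by linarith
  have hB0 : (0 : ℝ) < (B : ℝ) := by exact_mod_cast hB
  intro t
  induction t with
  | zero =>
    rw [h0, sub_self, norm_zero]
    exact mul_nonneg (div_nonneg (by linarith) hμ.le) hρ0
  | succ t ih =>
    set g : EuclideanSpace ℝ (Fin p) → EuclideanSpace ℝ (Fin p) := fun x => x - (η / B) • ∑ i ∈ 𝓑 t, gradient (Fi i) x with hg
    -- Lipschitz estimate for g
    have hlip : ∀ x y : EuclideanSpace ℝ (Fin p), ‖g x - g y‖ ≤ (1 - η * μ) * ‖x - y‖ := by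
      intro x y
      have := Convex.norm_image_sub_le_of_norm_hasFDerivWithin_le
        (f := g)
        (f' := fun z => ContinuousLinearMap.id ℝ (EuclideanSpace ℝ (Fin p))
          - (η / B) • ∑ i ∈ 𝓑 t, fderiv ℝ (gradient (Fi i)) z)
        (C := 1 - η * μ) (s := Set.univ)
        (fun z _ => by
          have hs : HasFDerivAt (fun x : EuclideanSpace ℝ (Fin p) => ∑ i ∈ 𝓑 t, gradient (Fi i) x)
              (∑ i ∈ 𝓑 t, fderiv ℝ (gradient (Fi i)) z) z :=
            HasFDerivAt.fun_sum (fun i _ => ((grad_diff (hFi i)) z).hasFDerivAt)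
          exact ((hasFDerivAt_id z).sub (hs.const_smul (η / B))).hasFDerivWithinAt)
        (fun z _ => by
          apply ContinuousLinearMap.opNorm_le_bound _ h1ημ
          intro v
          set A : EuclideanSpace ℝ (Fin p) →L[ℝ] EuclideanSpace ℝ (Fin p) := ((B : ℝ)⁻¹) • ∑ i ∈ 𝓑 t, fderiv ℝ (gradient (Fi i)) z with hA
          have hiA : ∀ u w : EuclideanSpace ℝ (Fin p), ⟪u, A w⟫
              = (B : ℝ)⁻¹ * ∑ i ∈ 𝓑 t, ⟪u, fderiv ℝ (gradient (Fi i)) z w⟫ := by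
            intro u w
            simp [hA, ContinuousLinearMap.sum_apply, inner_smul_right, inner_sum]
          have hsymmA : ∀ u w : EuclideanSpace ℝ (Fin p), ⟪u, A w⟫ = ⟪w, A u⟫ := by
            intro u w
            rw [hiA, hiA]
            congr 1
            exact Finset.sum_congr rfl fun i _ => grad_symm (hFi i) z u w
          have hlowA : ∀ w : EuclideanSpace ℝ (Fin p), μ * ‖w‖ ^ 2 ≤ ⟪w, A w⟫ := by
            intro w
            rw [hiA]
            have hsum : (B : ℝ) * (μ * ‖w‖ ^ 2)
                ≤ ∑ i ∈ 𝓑 t, ⟪w, fderiv ℝ (gradient (Fi i)) z w⟫ := by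
              calc (B : ℝ) * (μ * ‖w‖ ^ 2)
                  = ∑ _i ∈ 𝓑 t, (μ * ‖w‖ ^ 2) := by
                    rw [Finset.sum_const, h𝓑 t, nsmul_eq_mul]
                _ ≤ _ := Finset.sum_le_sum fun i _ => hlow i z w
            calc μ * ‖w‖ ^ 2 = (B : ℝ)⁻¹ * ((B : ℝ) * (μ * ‖w‖ ^ 2)) := by
                  field_simp
              _ ≤ _ := by
                  apply mul_le_mul_of_nonneg_left hsum (by positivity)
          have hupA : ∀ w : EuclideanSpace ℝ (Fin p), ⟪w, A w⟫ ≤ L * ‖w‖ ^ 2 := by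
            intro w
            rw [hiA]
            have hsum : ∑ i ∈ 𝓑 t, ⟪w, fderiv ℝ (gradient (Fi i)) z w⟫
                ≤ (B : ℝ) * (L * ‖w‖ ^ 2) := by
              calc _ ≤ ∑ _i ∈ 𝓑 t, (L * ‖w‖ ^ 2) :=
                    Finset.sum_le_sum fun i _ => hup i z w
                _ = (B : ℝ) * (L * ‖w‖ ^ 2) := by
                    rw [Finset.sum_const, h𝓑 t, nsmul_eq_mul]
            calc (B : ℝ)⁻¹ * ∑ i ∈ 𝓑 t, ⟪w, fderiv ℝ (gradient (Fi i)) z w⟫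
                ≤ (B : ℝ)⁻¹ * ((B : ℝ) * (L * ‖w‖ ^ 2)) :=
                  mul_le_mul_of_nonneg_left hsum (by positivity)
              _ = L * ‖w‖ ^ 2 := by field_simp
          have hkey := key_op A μ L η hμ hμL hη hη2' hsymmA hlowA hupA v
          have heq : (ContinuousLinearMap.id ℝ (EuclideanSpace ℝ (Fin p))
              - (η / B) • ∑ i ∈ 𝓑 t, fderiv ℝ (gradient (Fi i)) z) v = v - η • A v := by
            simp [hA, ContinuousLinearMap.sub_apply, ContinuousLinearMap.smul_apply,
              smul_smul, div_eq_mul_inv]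
          rw [heq]
          calc ‖v - η • A v‖ ≤ (1 - η * μ) * ‖v‖ := hkey
            _ = (1 - η * μ) * ‖v‖ := rfl)
        convex_univ (Set.mem_univ y) (Set.mem_univ x)
      simpa using this
    -- error term
    set D : ℝ := ((𝓑 t ∩ R).card : ℝ) with hD
    have hD0 : 0 ≤ D := by positivity
    have hDB : D < (B : ℝ) := by rw [hD]; exact_mod_cast hΔB t
    have hBD : 0 < (B : ℝ) - D := by linarith
    set P : EuclideanSpace ℝ (Fin p) := ∑ i ∈ 𝓑 t \ R, gradient (Fi i) (usw t) with hP
    set Q : EuclideanSpace ℝ (Fin p) := ∑ i ∈ 𝓑 t ∩ R, gradient (Fi i) (usw t) with hQ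
    have hPQ : ∑ i ∈ 𝓑 t, gradient (Fi i) (usw t) = P + Q := by
      rw [hP, hQ, ← Finset.sdiff_inter_self_left (𝓑 t) R]
      exact (Finset.sum_sdiff Finset.inter_subset_left).symm
    have hcardP : ((𝓑 t \ R).card : ℝ) = (B : ℝ) - D := by
      have := Finset.card_sdiff_add_card_inter (𝓑 t) R
      rw [h𝓑 t] at this
      have h2 : ((𝓑 t \ R).card : ℝ) + D = (B : ℝ) := by rw [hD]; exact_mod_cast this
      linarith
    have hPn : ‖P‖ ≤ ((B : ℝ) - D) * c₂ := by
      calc ‖P‖ ≤ ∑ i ∈ 𝓑 t \ R, ‖gradient (Fi i) (usw t)‖ := norm_sum_le _ _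
        _ ≤ ∑ _i ∈ 𝓑 t \ R, c₂ := Finset.sum_le_sum fun i _ => hc i t
        _ = ((𝓑 t \ R).card : ℝ) * c₂ := by rw [Finset.sum_const, nsmul_eq_mul]
        _ = ((B : ℝ) - D) * c₂ := by rw [hcardP]
    have hQn : ‖Q‖ ≤ D * c₂ := by
      calc ‖Q‖ ≤ ∑ i ∈ 𝓑 t ∩ R, ‖gradient (Fi i) (usw t)‖ := norm_sum_le _ _
        _ ≤ ∑ _i ∈ 𝓑 t ∩ R, c₂ := Finset.sum_le_sum fun i _ => hc i t
        _ = D * c₂ := by rw [Finset.sum_const, nsmul_eq_mul]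
    have herr : ‖g (usw t) - usw (t + 1)‖ ≤ 2 * η * ρ * c₂ := by
      have he1 : g (usw t) - usw (t + 1)
          = (η / ((B : ℝ) - D) - η / B) • P - (η / B) • Q := by
        rw [husw t, hg]
        simp only [hPQ, ← hD]
        rw [smul_add, sub_smul]
        abel
      rw [he1]
      have hab : 0 ≤ η / ((B : ℝ) - D) - η / B := by
        rw [sub_nonneg]
        apply div_le_div_of_nonneg_left hη.le hBD
        linarith
      calc ‖(η / ((B : ℝ) - D) - η / B) • P - (η / B) • Q‖
          ≤ ‖(η / ((B : ℝ) - D) - η / B) • P‖ + ‖(η / B) • Q‖ := norm_sub_le _ _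
        _ = (η / ((B : ℝ) - D) - η / B) * ‖P‖ + (η / B) * ‖Q‖ := by
            rw [norm_smul, norm_smul, Real.norm_eq_abs, Real.norm_eq_abs,
              abs_of_nonneg hab, abs_of_nonneg (by positivity)]
        _ ≤ (η / ((B : ℝ) - D) - η / B) * (((B : ℝ) - D) * c₂) + (η / B) * (D * c₂) := by
            apply add_le_add
            · exact mul_le_mul_of_nonneg_left hPn hab
            · exact mul_le_mul_of_nonneg_left hQn (by positivity)
        _ = 2 * η * (D / B) * c₂ := by
            field_simp
            ring
        _ ≤ 2 * η * ρ * c₂ := by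
            apply mul_le_mul_of_nonneg_right _ hc₂
            apply mul_le_mul_of_nonneg_left (hρ t) (by positivity)
    -- combine
    have hdecomp : sw (t + 1) - usw (t + 1) = (g (sw t) - g (usw t)) + (g (usw t) - usw (t + 1)) := by
      rw [hsw t, hg]
      beta_reduce
      abel
    calc ‖sw (t + 1) - usw (t + 1)‖
        ≤ ‖g (sw t) - g (usw t)‖ + ‖g (usw t) - usw (t + 1)‖ := by
          rw [hdecomp]; exact norm_add_le _ _
      _ ≤ (1 - η * μ) * ‖sw t - usw t‖ + 2 * η * ρ * c₂ :=
          add_le_add (hlip (sw t) (usw t)) herr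
      _ ≤ (1 - η * μ) * ((2 * c₂ / μ) * ρ) + 2 * η * ρ * c₂ := by
          apply add_le_add_left
          exact mul_le_mul_of_nonneg_left ih h1ημ
      _ = (2 * c₂ / μ) * ρ := by
          field_simp
          ring
end
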